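/- Let r be a nonnegative integer and let n, k be nonnegative integers. Applying the k-th iterate of the central difference operator to the function x ↦ x^n and evaluating at r gives (1/k!) (δ^k (x ↦ x^n))(r) = T_r(n+r, k+r) when n ≥ k, and (δ^k (x ↦ x^n))(r) = 0 when n < k. -/

import Mathlib

/-- The central difference operator: `(δ f)(x) = f(x + 1/2) - f(x - 1/2)`. -/
noncomputable def cdiff (f : ℝ → ℝ) : ℝ → ℝ := fun x => f (x + 1 / 2) - f (x - 1 / 2)

/-- The extended `r`-central factorial numbers of the second kind:
`T_r(n+r,k+r) = (1/k!) ∑_{j=0}^{k} (-1)^{k-j} C(k,j) (j + r - k/2)^n`. -/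
noncomputable def rcentralT (r n k : ℕ) : ℝ :=
  (1 / (Nat.factorial k : ℝ)) * ∑ j ∈ Finset.range (k + 1),
    (-1 : ℝ) ^ (k - j) * (Nat.choose k j : ℝ) * ((j : ℝ) + (r : ℝ) - (k : ℝ) / 2) ^ n

open fwdDiff in
lemma cdiff_eq_fwdDiff (f : ℝ → ℝ) (x : ℝ) : cdiff f x = fwdDiff (1:ℝ) f (x - 1/2) := by
  simp only [cdiff, fwdDiff]
  ring_nf

lemma fwdDiff_iter_comp_add' (f : ℝ → ℝ) (c : ℝ) (k : ℕ) :
    (fwdDiff (1:ℝ))^[k] (fun x => f (x + c)) = fun y => (fwdDiff (1:ℝ))^[k] f (y + c) := by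
  induction k generalizing f with
  | zero => simp
  | succ k ih =>
    rw [Function.iterate_succ_apply, Function.iterate_succ_apply]
    have : fwdDiff (1:ℝ) (fun x => f (x + c)) = fun x => (fwdDiff (1:ℝ) f) (x + c) := by
      funext x; simp only [fwdDiff]; ring_nf
    rw [this, ih]

lemma cdiff_iter_eq_fwdDiff (f : ℝ → ℝ) (k : ℕ) (x : ℝ) :
    cdiff^[k] f x = (fwdDiff (1:ℝ))^[k] f (x - k / 2) := by
  induction k generalizing f x with
  | zero => simp
  | succ k ih =>
    rw [Function.iterate_succ_apply, ih]
    have hc : cdiff f = fun x => (fwdDiff (1:ℝ) f) (x + (-(1/2))) := by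
      funext y; rw [cdiff_eq_fwdDiff]; ring_nf
    rw [hc, fwdDiff_iter_comp_add', Function.iterate_succ_apply]
    push_cast
    ring_nf

open fwdDiff in
lemma fwdDiff_iter_pow_eq_zero (n k : ℕ) (h : n < k) :
    (fwdDiff (1:ℝ))^[k] (fun x : ℝ => x ^ n) = 0 := by
  induction k generalizing n with
  | zero => omega
  | succ k ih =>
    rw [Function.iterate_succ_apply]
    have hd : fwdDiff (1:ℝ) (fun x : ℝ => x ^ n) =
        ∑ m ∈ Finset.range n, (n.choose m : ℝ) • (fun x : ℝ => x ^ m) := by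
      funext x
      simp only [fwdDiff, Finset.sum_apply, Pi.smul_apply, smul_eq_mul]
      rw [add_pow]
      rw [Finset.sum_range_succ]
      simp [mul_comm]
    rw [hd, fwdDiff_iter_finset_sum]
    have : ∀ m ∈ Finset.range n, (fwdDiff (1:ℝ))^[k] ((n.choose m : ℝ) • (fun x : ℝ => x ^ m)) = 0 := by
      intro m hm
      rw [fwdDiff_iter_const_smul, ih m (by simp at hm; omega)]
      simp
    rw [Finset.sum_congr rfl this]
    simp

open fwdDiff in
/-- For nonnegative integers `r, n, k`:
`(1/k!)(δ^k (x ↦ x^n))(r) = T_r(n+r, k+r)` when `n ≥ k`, and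
`(δ^k (x ↦ x^n))(r) = 0` when `n < k`. -/
theorem cdiff_iterate_pow_eq_rcentralT (r n k : ℕ) :
    (k ≤ n →
      (1 / (Nat.factorial k : ℝ)) * (cdiff^[k] (fun x : ℝ => x ^ n)) (r : ℝ) =
        rcentralT r n k) ∧
    (n < k → (cdiff^[k] (fun x : ℝ => x ^ n)) (r : ℝ) = 0) := by
  constructor
  · intro _
    rw [cdiff_iter_eq_fwdDiff, fwdDiff_iter_eq_sum_shift, rcentralT]
    congr 1
    refine Finset.sum_congr rfl fun j hj => ?_
    simp only [zsmul_eq_mul, nsmul_eq_mul, mul_one]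
    push_cast
    ring_nf
  · intro h
    rw [cdiff_iter_eq_fwdDiff, fwdDiff_iter_pow_eq_zero n k h]
    simp
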